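/- If 𝒢 is an isomorphism-closed class of finite simple graphs that is closed under taking minors and closed under path-addition, and 𝒢 contains a graph with at least two vertices, then 𝒢 contains every finite simple graph. (Equivalently, a minor-closed class closed under path-addition is trivial: it is empty, consists only of vertexless/single-vertex edgeless graphs, or is the class of all finite simple graphs.) -/

import Mathlib

/-- Points of the plane `ℝ²`. -/
abbrev Plane : Type := ℝ × ℝ

/-- The `i`-th vertex of a path from `a` to `b` whose internal vertices are
`w 0, …, w (t-1)` (so the path has length `t + 1`). -/
def chainVertex {α : Type*} (a b : α) {t : ℕ} (w : Fin t → α) (i : Fin (t + 2)) : α :=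
  if _h0 : (i : ℕ) = 0 then a
  else if _h1 : (i : ℕ) = t + 1 then b
  else w ⟨(i : ℕ) - 1, by have := i.isLt; omega⟩

/-- The edge set of a path from `a` to `b` through the internal vertices
`w 0, …, w (t-1)`. -/
def chainEdges {α : Type*} (a b : α) {t : ℕ} (w : Fin t → α) : Set (Sym2 α) :=
  {e | ∃ i : Fin (t + 1),
    e = s(chainVertex a b w (Fin.castSucc i), chainVertex a b w (Fin.succ i))}

/-- Path-addition `G ⊕ P ⊕ F`: the graph on `V ⊕ Fin t` obtained from `G` by adding an
internally vertex-disjoint path `P = (u, w₁, …, w_t, v)` with `t` new internal vertices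
together with a set `F` of supplementary edges. -/
def pathAdd {V : Type*} (G : SimpleGraph V) (u v : V) (t : ℕ)
    (F : Set (Sym2 (V ⊕ Fin t))) : SimpleGraph (V ⊕ Fin t) :=
  SimpleGraph.fromEdgeSet
    ((Sym2.map Sum.inl '' G.edgeSet)
      ∪ chainEdges (Sum.inl u) (Sum.inl v) (fun i => Sum.inr i)
      ∪ F)

/-- A valid supplementary edge set: every supplementary edge is a non-loop with at least
one endpoint among the internal vertices `w₁, …, w_t` of the added path. -/
def ValidSupp {V : Type*} {t : ℕ} (F : Set (Sym2 (V ⊕ Fin t))) : Prop :=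
  ∀ e ∈ F, ¬ e.IsDiag ∧ ∃ i : Fin t, Sum.inr i ∈ e

/-- An isomorphism-closed class of finite simple graphs. -/
def IsoClosed (𝒢 : ∀ V : Type, Fintype V → SimpleGraph V → Prop) : Prop :=
  ∀ (V W : Type) [iV : Fintype V] [iW : Fintype W]
    (G : SimpleGraph V) (H : SimpleGraph W),
    Nonempty (G ≃g H) → 𝒢 V iV G → 𝒢 W iW H

/-- A class of finite simple graphs is closed under path-addition if for every member
`G`, all distinct vertices `u, v` of `G`, and every internally vertex-disjoint path with
new internal vertices of length at least `|V(G)| - 1`, there is a supplementary edge set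
`F` such that `G ⊕ P ⊕ F` belongs to the class. -/
def ClosedUnderPathAddition (𝒢 : ∀ V : Type, Fintype V → SimpleGraph V → Prop) : Prop :=
  ∀ (V : Type) [iV : Fintype V] (G : SimpleGraph V), 𝒢 V iV G →
    ∀ u v : V, u ≠ v → ∀ t : ℕ, Fintype.card V - 1 ≤ t + 1 →
      ∃ F : Set (Sym2 (V ⊕ Fin t)), ValidSupp F ∧
        𝒢 (V ⊕ Fin t) inferInstance (pathAdd G u v t F)

/-- `H` is a minor of `G`: there is a family of nonempty pairwise disjoint branch sets in
`V(G)`, each inducing a connected subgraph of `G`, such that every edge of `H` is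
realized by an edge of `G` between the corresponding branch sets. -/
def IsMinorOf {W V : Type*} (H : SimpleGraph W) (G : SimpleGraph V) : Prop :=
  ∃ B : W → Set V,
    (∀ h : W, (B h).Nonempty) ∧
    (Pairwise fun h h' : W => Disjoint (B h) (B h')) ∧
    (∀ h : W, (G.induce (B h)).Connected) ∧
    (∀ h h' : W, H.Adj h h' → ∃ x ∈ B h, ∃ y ∈ B h', G.Adj x y)

/-- A class of finite simple graphs is minor-closed if it contains every minor of each of
its members. -/
def MinorClosed (𝒢 : ∀ V : Type, Fintype V → SimpleGraph V → Prop) : Prop :=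
  ∀ (V W : Type) [iV : Fintype V] [iW : Fintype W]
    (G : SimpleGraph V) (H : SimpleGraph W),
    𝒢 V iV G → IsMinorOf H G → 𝒢 W iW H

/-!
A minor of a member of `𝒢` with at least two vertices lies in `𝒢` by minor-closure, and the
empty graph is such a minor. If `u ∈ B c` and `v ∈ B x` for a minor model `B` of `H`, then after
adding a `u`–`v` path the branch set `B c` can absorb the path minus `v`, which gives a model of
`H + cx`. The first internal vertex of a path added between any two vertices is a fresh branch
set, which gives a model of `H` plus an isolated vertex. Every finite graph is built from the
empty graph by these two operations.
-/

open SimpleGraph Function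

theorem SimpleGraph.Connected.induce_range {V V' : Type*} {G : SimpleGraph V}
    {G' : SimpleGraph V'} (hG : G.Connected) (φ : G →g G') :
    (G'.induce (Set.range φ)).Connected :=
  hG.map ⟨fun x => ⟨φ x, x, rfl⟩, φ.map_adj⟩ (by rintro ⟨_, x, rfl⟩; exact ⟨x, rfl⟩)

theorem SimpleGraph.Connected.induce_image {V V' : Type*} {G : SimpleGraph V}
    {G' : SimpleGraph V'} {s : Set V} (hs : (G.induce s).Connected) (φ : G →g G') :
    (G'.induce (φ '' s)).Connected := by
  rw [Set.image_eq_range]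
  exact hs.induce_range (φ.comp (Embedding.induce s).toHom)

theorem SimpleGraph.connected_induce_range_of_adj_succ {α : Type*} {K : SimpleGraph α} {n : ℕ}
    {f : Fin (n + 1) → α} (hf : ∀ i : Fin n, K.Adj (f i.castSucc) (f i.succ)) :
    (K.induce (Set.range f)).Connected := by
  refine (pathGraph_connected n).induce_range ⟨f, fun {i j} hij => ?_⟩
  rcases pathGraph_adj.mp hij with h | h
  · obtain ⟨k, rfl, rfl⟩ : ∃ k : Fin n, i = k.castSucc ∧ j = k.succ :=
      ⟨⟨i, by omega⟩, Fin.ext rfl, Fin.ext (by simp [← h])⟩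
    exact hf k
  · obtain ⟨k, rfl, rfl⟩ : ∃ k : Fin n, j = k.castSucc ∧ i = k.succ :=
      ⟨⟨j, by omega⟩, Fin.ext rfl, Fin.ext (by simp [← h])⟩
    exact (hf k).symm

section Chain

variable {α : Type*} {a b : α} {t : ℕ} {w : Fin t → α}

@[simp]
theorem chainVertex_last : chainVertex a b w (Fin.last (t + 1)) = b := by
  simp [chainVertex]

theorem chainVertex_castSucc_mem (i : Fin (t + 1)) :
    chainVertex a b w i.castSucc ∈ insert a (Set.range w) := by
  unfold chainVertex
  split_ifs with h0 h1
  · exact Set.mem_insert a _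
  · simp at h1; omega
  · exact Set.mem_insert_of_mem a ⟨_, rfl⟩

theorem chainVertex_castSucc_ne_succ (hab : a ≠ b) (hw : Injective w) (ha : a ∉ Set.range w)
    (hb : b ∉ Set.range w) (i : Fin (t + 1)) :
    chainVertex a b w i.castSucc ≠ chainVertex a b w i.succ := by
  unfold chainVertex
  simp only [Fin.val_castSucc, Fin.val_succ, Nat.add_eq_zero_iff, one_ne_zero, and_false,
    dite_false, Nat.add_right_cancel_iff]
  have := i.isLt
  split_ifs <;> first
    | omega
    | exact hab
    | exact fun h => ha ⟨_, h.symm⟩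
    | exact fun h => hb ⟨_, h⟩
    | (rw [Ne, hw.eq_iff, Fin.mk.injEq]; omega)

end Chain

section PathAddition

variable {V : Type*} {G : SimpleGraph V} {u v : V} {t : ℕ} {F : Set (Sym2 (V ⊕ Fin t))}

theorem pathAdd_adj_inl {x y : V} (h : G.Adj x y) :
    (pathAdd G u v t F).Adj (Sum.inl x) (Sum.inl y) := by
  rw [pathAdd, fromEdgeSet_adj]
  exact ⟨Or.inl (Or.inl ⟨s(x, y), h, rfl⟩), by simp [h.ne]⟩

def pathAddInl (G : SimpleGraph V) (u v : V) (t : ℕ) (F : Set (Sym2 (V ⊕ Fin t))) :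
    G →g pathAdd G u v t F :=
  ⟨Sum.inl, pathAdd_adj_inl⟩

theorem pathAdd_adj_chainVertex (huv : u ≠ v) (i : Fin (t + 1)) :
    (pathAdd G u v t F).Adj (chainVertex (Sum.inl u) (Sum.inl v) Sum.inr i.castSucc)
      (chainVertex (Sum.inl u) (Sum.inl v) Sum.inr i.succ) := by
  rw [pathAdd, fromEdgeSet_adj]
  refine ⟨Or.inl (Or.inr ⟨i, rfl⟩), ?_⟩
  exact chainVertex_castSucc_ne_succ (by simpa using huv) Sum.inr_injective (by simp) (by simp) i

end PathAddition

structure IsMinorModel {W V : Type*} (H : SimpleGraph W) (G : SimpleGraph V) (B : W → Set V) :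
    Prop where
  nonempty : ∀ h, (B h).Nonempty
  pairwise_disjoint : Pairwise fun h h' => Disjoint (B h) (B h')
  connected : ∀ h, (G.induce (B h)).Connected
  exists_adj : ∀ h h', H.Adj h h' → ∃ x ∈ B h, ∃ y ∈ B h', G.Adj x y

theorem isMinorOf_iff_exists_isMinorModel {W V : Type*} {H : SimpleGraph W}
    {G : SimpleGraph V} : IsMinorOf H G ↔ ∃ B, IsMinorModel H G B :=
  ⟨fun ⟨B, h₁, h₂, h₃, h₄⟩ => ⟨B, h₁, h₂, h₃, h₄⟩, fun ⟨B, h₁, h₂, h₃, h₄⟩ => ⟨B, h₁, h₂, h₃, h₄⟩⟩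

namespace IsMinorModel

variable {W W' V V' : Type*} {H H' : SimpleGraph W} {G : SimpleGraph V} {G' : SimpleGraph V'}
  {B : W → Set V}

theorem mono (hB : IsMinorModel H G B) (h : H' ≤ H) : IsMinorModel H' G B :=
  ⟨hB.nonempty, hB.pairwise_disjoint, hB.connected, fun _ _ hww => hB.exists_adj _ _ (h hww)⟩

theorem comap (hB : IsMinorModel H G B) (f : W' ↪ W) : IsMinorModel (H.comap f) G (B ∘ f) :=
  ⟨fun _ => hB.nonempty _, fun _ _ hww => hB.pairwise_disjoint (f.injective.ne hww),
    fun _ => hB.connected _, fun _ _ hww => hB.exists_adj _ _ hww⟩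

theorem image (hB : IsMinorModel H G B) (φ : G →g G') (hφ : Injective φ) :
    IsMinorModel H G' fun w => φ '' B w where
  nonempty w := (hB.nonempty w).image φ
  pairwise_disjoint _ _ hww := Set.disjoint_image_of_injective hφ (hB.pairwise_disjoint hww)
  connected w := (hB.connected w).induce_image φ
  exists_adj w w' hww := by
    obtain ⟨x, hx, y, hy, hxy⟩ := hB.exists_adj w w' hww
    exact ⟨φ x, Set.mem_image_of_mem φ hx, φ y, Set.mem_image_of_mem φ hy, φ.map_adj hxy⟩

theorem map_some (hB : IsMinorModel H G B) {S : Set V} (hS : S.Nonempty)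
    (hSB : ∀ w, Disjoint S (B w)) (hSconn : (G.induce S).Connected) :
    IsMinorModel (H.map Embedding.some) G fun o => o.elim S B where
  nonempty := by
    rintro (_ | w)
    exacts [hS, hB.nonempty w]
  pairwise_disjoint := by
    rintro (_ | w) (_ | w') hww
    · exact absurd rfl hww
    · exact hSB w'
    · exact (hSB w).symm
    · exact hB.pairwise_disjoint fun h => hww (congrArg some h)
  connected := by
    rintro (_ | w)
    exacts [hSconn, hB.connected w]
  exists_adj := by
    intro o o' hoo
    obtain ⟨w, w', hww, rfl, rfl⟩ := (map_adj _ _ _ _).mp hoo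
    exact hB.exists_adj w w' hww

theorem sup_edge [DecidableEq W] (hB : IsMinorModel H G B) {c x : W} {S : Set V}
    (hSB : ∀ w ≠ c, Disjoint S (B w)) (hconn : (G.induce (B c ∪ S)).Connected)
    {y z : V} (hy : y ∈ B c ∪ S) (hz : z ∈ B x) (hyz : G.Adj y z) :
    IsMinorModel (H ⊔ edge c x) G (update B c (B c ∪ S)) := by
  set B' := update B c (B c ∪ S) with hB'
  have hBB' : ∀ w, B w ⊆ B' w := by
    intro w
    rcases eq_or_ne w c with rfl | hw
    · simp [B']
    · simp [B', hw]
  have hdisj : ∀ w ≠ c, Disjoint (B' c) (B' w) := fun w hw => by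
    simpa [B', hw] using Disjoint.union_left (hB.pairwise_disjoint hw.symm) (hSB w hw)
  refine ⟨fun w => (hB.nonempty w).mono (hBB' w), fun w w' hww => ?_, fun w => ?_, ?_⟩
  · rcases eq_or_ne w c with rfl | hw
    · exact hdisj w' hww.symm
    rcases eq_or_ne w' c with rfl | hw'
    · exact (hdisj w hw).symm
    simpa [B', hw, hw'] using hB.pairwise_disjoint hww
  · rcases eq_or_ne w c with rfl | hw
    · rwa [hB', update_self]
    · rw [hB', update_of_ne hw]
      exact hB.connected w
  · rintro w w' (hww | hww)
    · obtain ⟨p, hp, q, hq, hpq⟩ := hB.exists_adj w w' hww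
      exact ⟨p, hBB' w hp, q, hBB' w' hq, hpq⟩
    obtain ⟨⟨rfl, rfl⟩ | ⟨rfl, rfl⟩, -⟩ := (edge_adj _ _ _ _).mp hww
    · exact ⟨y, by simpa [B'] using hy, z, hBB' _ hz, hyz⟩
    · exact ⟨z, hBB' _ hz, y, by simpa [B'] using hy, hyz.symm⟩

end IsMinorModel

def IsMinorOfNontrivialMember (𝒢 : ∀ V : Type, Fintype V → SimpleGraph V → Prop) {W : Type*}
    (H : SimpleGraph W) : Prop :=
  ∃ (V : Type) (iV : Fintype V) (G : SimpleGraph V) (B : W → Set V),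
    𝒢 V iV G ∧ Nontrivial V ∧ IsMinorModel H G B

namespace IsMinorOfNontrivialMember

variable {𝒢 : ∀ V : Type, Fintype V → SimpleGraph V → Prop} {W W' : Type*}
  {H H' : SimpleGraph W}

theorem mono (hH : IsMinorOfNontrivialMember 𝒢 H) (h : H' ≤ H) :
    IsMinorOfNontrivialMember 𝒢 H' :=
  let ⟨V, iV, G, B, hG, hV, hB⟩ := hH
  ⟨V, iV, G, B, hG, hV, hB.mono h⟩

theorem comap (hH : IsMinorOfNontrivialMember 𝒢 H) (f : W' ↪ W) :
    IsMinorOfNontrivialMember 𝒢 (H.comap f) :=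
  let ⟨V, iV, G, B, hG, hV, hB⟩ := hH
  ⟨V, iV, G, B ∘ f, hG, hV, hB.comap f⟩

theorem of_isEmpty [IsEmpty W] (H : SimpleGraph W)
    (hne : ∃ (V : Type) (iV : Fintype V) (G : SimpleGraph V),
      𝒢 V iV G ∧ 2 ≤ @Fintype.card V iV) :
    IsMinorOfNontrivialMember 𝒢 H :=
  let ⟨V, iV, G, hG, hV⟩ := hne
  ⟨V, iV, G, isEmptyElim, hG, Fintype.one_lt_card_iff_nontrivial.mp hV,
    isEmptyElim, fun h => isEmptyElim h, isEmptyElim, fun h => isEmptyElim h⟩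

theorem mem {W : Type} [iW : Fintype W] {H : SimpleGraph W} (hminor : MinorClosed 𝒢)
    (hH : IsMinorOfNontrivialMember 𝒢 H) : 𝒢 W iW H :=
  let ⟨V, _, G, B, hG, _, hB⟩ := hH
  hminor V W G H hG (isMinorOf_iff_exists_isMinorModel.mpr ⟨B, hB⟩)

theorem of_forall_pathAdd (hpa : ClosedUnderPathAddition 𝒢) {V : Type} [iV : Fintype V]
    [Nontrivial V] {G : SimpleGraph V} (hG : 𝒢 V iV G) {u v : V} (huv : u ≠ v)
    (h : ∀ t, 0 < t → ∀ F, ∃ B, IsMinorModel H (pathAdd G u v t F) B) :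
    IsMinorOfNontrivialMember 𝒢 H := by
  obtain ⟨F, -, hF⟩ := hpa V G hG u v huv (Fintype.card V) (by omega)
  obtain ⟨B, hB⟩ := h _ Fintype.card_pos F
  exact ⟨_, _, _, B, hF, Sum.inl_injective.nontrivial, hB⟩

theorem map_some (hpa : ClosedUnderPathAddition 𝒢) (hH : IsMinorOfNontrivialMember 𝒢 H) :
    IsMinorOfNontrivialMember 𝒢 (H.map Embedding.some) := by
  obtain ⟨V, iV, G, B, hG, hV, hB⟩ := hH
  obtain ⟨u, v, huv⟩ := exists_pair_ne V
  refine of_forall_pathAdd hpa hG huv fun t ht F =>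
    ⟨_, (hB.image (pathAddInl G u v t F) Sum.inl_injective).map_some
      (Set.singleton_nonempty (Sum.inr ⟨0, ht⟩)) (fun w => ?_) ?_⟩
  · simp [pathAddInl]
  · exact Connected.of_subsingleton

theorem sup_edge (hpa : ClosedUnderPathAddition 𝒢) (hH : IsMinorOfNontrivialMember 𝒢 H)
    (c x : W) : IsMinorOfNontrivialMember 𝒢 (H ⊔ edge c x) := by
  classical
  rcases eq_or_ne c x with rfl | hcx
  · simpa using hH
  obtain ⟨V, iV, G, B, hG, hV, hB⟩ := hH
  obtain ⟨u, hu⟩ := hB.nonempty c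
  obtain ⟨v, hv⟩ := hB.nonempty x
  have huv : u ≠ v := fun h => Set.disjoint_left.mp (hB.pairwise_disjoint hcx) hu (h ▸ hv)
  refine of_forall_pathAdd hpa hG huv fun t _ F => ?_
  have hB' := hB.image (pathAddInl G u v t F) Sum.inl_injective
  -- the added path with its last vertex `v` removed
  set chain := fun i : Fin (t + 1) => chainVertex (Sum.inl u) (Sum.inl v) Sum.inr i.castSucc
  have hchain : ((pathAdd G u v t F).induce (Set.range chain)).Connected :=
    connected_induce_range_of_adj_succ fun i => by
      have := pathAdd_adj_chainVertex (G := G) (F := F) huv i.castSucc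
      rwa [Fin.succ_castSucc] at this
  refine ⟨_, hB'.sup_edge (S := Set.range chain) (fun w hw => ?_) ?_ (Or.inr ⟨Fin.last t, rfl⟩)
    ⟨v, hv, rfl⟩ ?_⟩
  · refine Set.disjoint_left.mpr ?_
    rintro _ ⟨i, rfl⟩ ⟨y, hy, hyi⟩
    rcases chainVertex_castSucc_mem i with hi | ⟨j, hj⟩
    · have hyu : y = u := Sum.inl_injective (hyi.trans hi)
      exact Set.disjoint_left.mp (hB.pairwise_disjoint hw) hy (hyu ▸ hu)
    · exact Sum.inl_ne_inr (hyi.trans hj.symm)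
  · exact induce_union_connected (hB'.connected c).preconnected hchain.preconnected
      ⟨Sum.inl u, ⟨u, hu, rfl⟩, ⟨0, rfl⟩⟩
  · have := pathAdd_adj_chainVertex (G := G) (F := F) huv (Fin.last t)
    rwa [Fin.succ_last, chainVertex_last] at this

end IsMinorOfNontrivialMember

theorem isMinorOfNontrivialMember_of_finite
    {𝒢 : ∀ V : Type, Fintype V → SimpleGraph V → Prop} (hpa : ClosedUnderPathAddition 𝒢)
    (hne : ∃ (V : Type) (iV : Fintype V) (G : SimpleGraph V),
      𝒢 V iV G ∧ 2 ≤ @Fintype.card V iV)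
    {W : Type} [Finite W] (H : SimpleGraph W) : IsMinorOfNontrivialMember 𝒢 H := by
  have hbot : IsMinorOfNontrivialMember 𝒢 (⊥ : SimpleGraph W) :=
    Finite.induction_empty_option (P := fun α => IsMinorOfNontrivialMember 𝒢 (⊥ : SimpleGraph α))
      (fun e h => (h.comap e.symm.toEmbedding).mono bot_le)
      (.of_isEmpty ⊥ hne) (fun h => (h.map_some hpa).mono bot_le) W
  rw [← fromEdgeSet_edgeSet H]
  refine Set.Finite.induction_on _ (Set.toFinite H.edgeSet) (by simpa using hbot) ?_
  intro e S _ _ hS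
  induction e using Sym2.ind with
  | h c x =>
    refine (hS.sup_edge hpa c x).mono ?_
    rw [Set.insert_eq, fromEdgeSet_union, sup_comm]
    rfl

theorem minorClosed_pathAdditionClosed_is_trivial_general
    (𝒢 : ∀ V : Type, Fintype V → SimpleGraph V → Prop)
    (hminor : MinorClosed 𝒢) (hpa : ClosedUnderPathAddition 𝒢)
    (hne : ∃ (V : Type) (iV : Fintype V) (G : SimpleGraph V),
      𝒢 V iV G ∧ 2 ≤ @Fintype.card V iV) :
    ∀ (W : Type) [iW : Fintype W] (H : SimpleGraph W), 𝒢 W iW H :=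
  fun _ _ H => (isMinorOfNontrivialMember_of_finite hpa hne H).mem hminor

/-- An isomorphism-closed class of finite simple graphs that is closed
under taking minors, closed under path-addition, and contains a graph with at least two
vertices contains every finite simple graph. -/
theorem minorClosed_pathAdditionClosed_is_trivial
    (𝒢 : ∀ V : Type, Fintype V → SimpleGraph V → Prop)
    (hiso : IsoClosed 𝒢) (hminor : MinorClosed 𝒢) (hpa : ClosedUnderPathAddition 𝒢)
    (hne : ∃ (V : Type) (iV : Fintype V) (G : SimpleGraph V),
      𝒢 V iV G ∧ 2 ≤ @Fintype.card V iV) :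
    ∀ (W : Type) [iW : Fintype W] (H : SimpleGraph W), 𝒢 W iW H :=
  minorClosed_pathAdditionClosed_is_trivial_general 𝒢 hminor hpa hne
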